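/- For every multiset Γ and Δ of LL formulas and every ML_P formula A: if Γ ⊢_LL Δ is derivable in linear logic, then Γ, t(A) ⊢_LL Δ is derivable in linear logic. -/

import Mathlib

/-- Formulas of ML_P: `F ::= 0 | ⊥ | X | F∧F | F∨F | F→F` with variables from `V`. -/
inductive Fml (V : Type) : Type where
  | zero : Fml V
  | bot : Fml V
  | var : V → Fml V
  | and : Fml V → Fml V → Fml V
  | or : Fml V → Fml V → Fml V
  | imp : Fml V → Fml V → Fml V

/-- Formulas of propositional linear logic with `⊗`, `⊕`, `⊸`, `!`, `?` and `0`. -/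
inductive LLF (V : Type) : Type where
  | zero : LLF V
  | var : V → LLF V
  | tensor : LLF V → LLF V → LLF V
  | oplus : LLF V → LLF V → LLF V
  | limp : LLF V → LLF V → LLF V
  | bang : LLF V → LLF V
  | quest : LLF V → LLF V

/-- Two-sided sequent calculus for linear logic (on the fragment `⊗, ⊕, ⊸, !, ?, 0`):
axiom, cut, the `⊗`, `⊕`, `⊸` and `0` rules, dereliction, promotion, weakening and
contraction for the exponentials (exchange is built in via multisets). -/
inductive LL {V : Type} : Multiset (LLF V) → Multiset (LLF V) → Prop where
  | ax (A : LLF V) : LL {A} {A}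
  | cut {Γ Γ' Δ Δ' : Multiset (LLF V)} {A : LLF V} :
      LL Γ (Δ + {A}) → LL (Γ' + {A}) Δ' → LL (Γ + Γ') (Δ + Δ')
  | zeroL {Γ Δ : Multiset (LLF V)} : LL (Γ + {LLF.zero}) Δ
  | tensorL {Γ Δ : Multiset (LLF V)} {A B : LLF V} :
      LL (Γ + {A, B}) Δ → LL (Γ + {LLF.tensor A B}) Δ
  | tensorR {Γ Γ' Δ Δ' : Multiset (LLF V)} {A B : LLF V} :
      LL Γ (Δ + {A}) → LL Γ' (Δ' + {B}) → LL (Γ + Γ') (Δ + Δ' + {LLF.tensor A B})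
  | oplusL {Γ Δ : Multiset (LLF V)} {A B : LLF V} :
      LL (Γ + {A}) Δ → LL (Γ + {B}) Δ → LL (Γ + {LLF.oplus A B}) Δ
  | oplusR1 {Γ Δ : Multiset (LLF V)} {A B : LLF V} :
      LL Γ (Δ + {A}) → LL Γ (Δ + {LLF.oplus A B})
  | oplusR2 {Γ Δ : Multiset (LLF V)} {A B : LLF V} :
      LL Γ (Δ + {B}) → LL Γ (Δ + {LLF.oplus A B})
  | limpL {Γ Γ' Δ Δ' : Multiset (LLF V)} {A B : LLF V} :
      LL Γ (Δ + {A}) → LL (Γ' + {B}) Δ' → LL (Γ + Γ' + {LLF.limp A B}) (Δ + Δ')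
  | limpR {Γ Δ : Multiset (LLF V)} {A B : LLF V} :
      LL (Γ + {A}) (Δ + {B}) → LL Γ (Δ + {LLF.limp A B})
  | derL {Γ Δ : Multiset (LLF V)} {A : LLF V} :
      LL (Γ + {A}) Δ → LL (Γ + {LLF.bang A}) Δ
  | derR {Γ Δ : Multiset (LLF V)} {A : LLF V} :
      LL Γ (Δ + {A}) → LL Γ (Δ + {LLF.quest A})
  | promL {Γ Δ : Multiset (LLF V)} {A : LLF V} :
      LL (Γ.map LLF.bang + {A}) (Δ.map LLF.quest) →
      LL (Γ.map LLF.bang + {LLF.quest A}) (Δ.map LLF.quest)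
  | promR {Γ Δ : Multiset (LLF V)} {A : LLF V} :
      LL (Γ.map LLF.bang) (Δ.map LLF.quest + {A}) →
      LL (Γ.map LLF.bang) (Δ.map LLF.quest + {LLF.bang A})
  | weakL {Γ Δ : Multiset (LLF V)} {A : LLF V} :
      LL Γ Δ → LL (Γ + {LLF.bang A}) Δ
  | weakR {Γ Δ : Multiset (LLF V)} {A : LLF V} :
      LL Γ Δ → LL Γ (Δ + {LLF.quest A})
  | contrL {Γ Δ : Multiset (LLF V)} {A : LLF V} :
      LL (Γ + {LLF.bang A, LLF.bang A}) Δ → LL (Γ + {LLF.bang A}) Δ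
  | contrR {Γ Δ : Multiset (LLF V)} {A : LLF V} :
      LL Γ (Δ + {LLF.quest A, LLF.quest A}) → LL Γ (Δ + {LLF.quest A})

open Classical in
/-- The translation `t` from ML_P formulas to LL formulas:
`t(0) = t(⊥) = 0`, `t(X) = !X`, `t(A∧B) = !b(A) ⊗ !b(B)`, `t(A∨B) = !b(A) ⊕ !b(B)`,
`t(A→B) = !(t(A) ⊸ b(B))`, where `b(A) = ?t(A)` if `A ∈ P` and `b(A) = t(A)` otherwise. -/
noncomputable def tr {V : Type} (P : Set (Fml V)) : Fml V → LLF V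
  | Fml.zero => LLF.zero
  | Fml.bot => LLF.zero
  | Fml.var x => LLF.bang (LLF.var x)
  | Fml.and A B =>
      LLF.tensor (LLF.bang (if A ∈ P then LLF.quest (tr P A) else tr P A))
        (LLF.bang (if B ∈ P then LLF.quest (tr P B) else tr P B))
  | Fml.or A B =>
      LLF.oplus (LLF.bang (if A ∈ P then LLF.quest (tr P A) else tr P A))
        (LLF.bang (if B ∈ P then LLF.quest (tr P B) else tr P B))
  | Fml.imp A B =>
      LLF.bang (LLF.limp (tr P A) (if B ∈ P then LLF.quest (tr P B) else tr P B))

open Classical in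
/-- The translation `b` : `b(A) = ?t(A)` if `A ∈ P`, and `b(A) = t(A)` otherwise. -/
noncomputable def br {V : Type} (P : Set (Fml V)) (A : Fml V) : LLF V :=
  if A ∈ P then LLF.quest (tr P A) else tr P A

/-! Every translation `t(A)` is `0`, a `!`-formula, or a `⊗`/`⊕` of two `!`-formulas, and each
of these can be weakened on the left: `0` by the `0` rule, `!F` by `!`-weakening, and `F ⊗ G`,
`F ⊕ G` by the left `⊗`/`⊕` rule once `F` and `G` can. -/

namespace LLF

variable {V : Type}

def Weakenable (F : LLF V) : Prop :=
  ∀ Γ Δ : Multiset (LLF V), LL Γ Δ → LL (Γ + {F}) Δ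

theorem weakenable_zero : (zero : LLF V).Weakenable := fun _ _ _ => LL.zeroL

theorem weakenable_bang (F : LLF V) : (bang F).Weakenable := fun _ _ => LL.weakL

theorem Weakenable.tensor {F G : LLF V} (hF : F.Weakenable) (hG : G.Weakenable) :
    (tensor F G).Weakenable := by
  intro Γ Δ h
  apply LL.tensorL
  have hpair : Γ + ({F, G} : Multiset (LLF V)) = Γ + {F} + {G} := by
    rw [Multiset.insert_eq_cons, ← Multiset.singleton_add, add_assoc]
  rw [hpair]
  exact hG _ _ (hF _ _ h)

theorem Weakenable.oplus {F G : LLF V} (hF : F.Weakenable) (hG : G.Weakenable) :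
    (oplus F G).Weakenable :=
  fun Γ Δ h => LL.oplusL (hF Γ Δ h) (hG Γ Δ h)

end LLF

theorem weakenable_tr {V : Type} (P : Set (Fml V)) (A : Fml V) : (tr P A).Weakenable := by
  cases A with
  | zero | bot => exact LLF.weakenable_zero
  | var | imp => exact LLF.weakenable_bang _
  | and => exact (LLF.weakenable_bang _).tensor (LLF.weakenable_bang _)
  | or => exact (LLF.weakenable_bang _).oplus (LLF.weakenable_bang _)

theorem t_weakening {V : Type} (P : Set (Fml V)) (Γ Δ : Multiset (LLF V)) (A : Fml V)
    (h : LL Γ Δ) : LL (Γ + {tr P A}) Δ :=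
  weakenable_tr P A Γ Δ h
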